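/- Let g ⊆ so(V) be a Lie subalgebra, and suppose there exists T ∈ Λ³V such that: T_X ∈ g^⊥ for every X ∈ V; T is nondegenerate, i.e. T_X = 0 implies X = 0; and T is g-invariant, i.e. [x, T_X] = T_{xX} for every x ∈ g and X ∈ V. Then Ric(R) = 0 for every R ∈ K(g,V). -/
import Mathlib

open scoped RealInnerProductSpace BigOperators

noncomputable section

variable {V : Type} [NormedAddCommGroup V] [InnerProductSpace ℝ V] [FiniteDimensional ℝ V]

/-- A skew-symmetric endomorphism of a real inner product space. -/
def IsSkew (A : V →ₗ[ℝ] V) : Prop := ∀ x y : V, ⟪A x, y⟫ = - ⟪x, A y⟫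

/-- The inner product on `Λ²V ≅ so(V)` for which `{eᵢ∧eⱼ : i<j}` is orthonormal,
computed in the standard orthonormal basis of `V`. -/
def formInner (F G : V → V) : ℝ :=
  ∑ i, ∑ j ∈ Finset.Ioi i,
    ⟪F (stdOrthonormalBasis ℝ V i), stdOrthonormalBasis ℝ V j⟫ *
      ⟪G (stdOrthonormalBasis ℝ V i), stdOrthonormalBasis ℝ V j⟫

/-- Membership in `K(g,V)`: a `g`-valued algebraic curvature tensor. -/
def IsCurv (g : Submodule ℝ (V →ₗ[ℝ] V))
    (R : V →ₗ[ℝ] V →ₗ[ℝ] (V →ₗ[ℝ] V)) : Prop :=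
  (∀ X Y : V, R X Y ∈ g) ∧
  (∀ X Y : V, R X Y = - R Y X) ∧
  (∀ X Y Z : V, R X Y Z + R Y Z X + R Z X Y = 0)

/-- Auxiliary: a symmetric, zero-diagonal double sum equals twice its upper triangle. -/
lemma aux_dbl {m : ℕ} (f : Fin m → Fin m → ℝ) (hsymm : ∀ i j, f i j = f j i)
    (hdiag : ∀ i, f i i = 0) :
    (∑ i, ∑ j, f i j) = 2 * ∑ i, ∑ j ∈ Finset.Ioi i, f i j := by
  have key : ∀ i : Fin m, ∑ j, f i j = ∑ j ∈ Finset.Ioi i, f i j + ∑ j ∈ Finset.Iio i, f i j := by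
    intro i
    have hu : (Finset.univ : Finset (Fin m)) = (Finset.Ioi i ∪ Finset.Iio i) ∪ {i} := by
      ext k; simp [Finset.mem_Ioi, Finset.mem_Iio]; omega
    rw [hu, Finset.sum_union, Finset.sum_union]
    · simp [hdiag]
    · simp [Finset.disjoint_left]; omega
    · simp [Finset.disjoint_left]; intro k hk; omega
  have flip : ∑ i, ∑ j ∈ Finset.Iio i, f i j = ∑ i, ∑ j ∈ Finset.Ioi i, f i j := by
    rw [Finset.sum_comm' (t' := Finset.univ) (s' := fun j => Finset.Ioi j)
      (by intro x y; simp [Finset.mem_Iio, Finset.mem_Ioi])]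
    exact Finset.sum_congr rfl fun i _ => Finset.sum_congr rfl fun j _ => hsymm j i
  simp_rw [key]
  rw [Finset.sum_add_distrib, flip]; ring

/-- Auxiliary: `∑ᵢ B(eᵢ, eᵢ)` is independent of the orthonormal basis. -/
lemma aux_bilin {ι κ : Type*} [Fintype ι] [Fintype κ] (e : OrthonormalBasis ι ℝ V)
    (b : OrthonormalBasis κ ℝ V) (B : V →ₗ[ℝ] V →ₗ[ℝ] ℝ) :
    ∑ i, B (e i) (e i) = ∑ j, B (b j) (b j) := by
  classical
  have pars : ∀ u v : V, ⟪u, v⟫ = ∑ i, ⟪u, e i⟫ * ⟪v, e i⟫ := by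
    intro u v
    rw [← e.sum_inner_mul_inner u v]
    exact Finset.sum_congr rfl fun i _ => by rw [real_inner_comm (e i) v]
  have h1 : ∀ i, B (e i) (e i) = ∑ k, ∑ j, ⟪b j, e i⟫ * ⟪b k, e i⟫ * B (b j) (b k) := by
    intro i
    conv_lhs => rw [← b.sum_repr' (e i)]
    rw [map_sum]
    refine Finset.sum_congr rfl fun k _ => ?_
    rw [map_smul, map_sum, LinearMap.sum_apply, Finset.smul_sum]
    refine Finset.sum_congr rfl fun j _ => ?_
    rw [map_smul, LinearMap.smul_apply]
    simp only [smul_eq_mul]; ring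
  calc ∑ i, B (e i) (e i)
      = ∑ i, ∑ k, ∑ j, ⟪b j, e i⟫ * ⟪b k, e i⟫ * B (b j) (b k) :=
        Finset.sum_congr rfl fun i _ => h1 i
    _ = ∑ k, ∑ j, ∑ i, ⟪b j, e i⟫ * ⟪b k, e i⟫ * B (b j) (b k) := by
        rw [Finset.sum_comm]
        exact Finset.sum_congr rfl fun k _ => Finset.sum_comm
    _ = ∑ k, ∑ j, (if j = k then (1:ℝ) else 0) * B (b j) (b k) := by
        refine Finset.sum_congr rfl fun k _ => Finset.sum_congr rfl fun j _ => ?_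
        rw [← Finset.sum_mul, ← pars, orthonormal_iff_ite.mp b.orthonormal j k]
    _ = ∑ j, B (b j) (b j) := by
        refine Finset.sum_congr rfl fun k _ => ?_
        simp [eq_comm]

theorem stmt_13
    (g : Submodule ℝ (V →ₗ[ℝ] V))
    (hgskew : ∀ A ∈ g, IsSkew A)
    (hglie : ∀ A ∈ g, ∀ B ∈ g, A ∘ₗ B - B ∘ₗ A ∈ g)
    (T : AlternatingMap ℝ V ℝ (Fin 3))
    (TX : V → (V →ₗ[ℝ] V))
    (hTX : ∀ X Y Z : V, ⟪TX X Y, Z⟫ = T ![X, Y, Z])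
    -- `T_X ∈ g^⊥` for every `X`
    (hperp : ∀ X : V, ∀ G ∈ g, formInner (⇑(TX X)) (⇑G) = 0)
    -- `T` is nondegenerate
    (hnd : ∀ X : V, TX X = 0 → X = 0)
    -- `T` is `g`-invariant: `[x, T_X] = T_{xX}`
    (hginv : ∀ x ∈ g, ∀ X : V, x ∘ₗ TX X - TX X ∘ₗ x = TX (x X)) :
    -- then every `R ∈ K(g,V)` is Ricci flat
    ∀ R : V →ₗ[ℝ] V →ₗ[ℝ] (V →ₗ[ℝ] V), IsCurv g R →
      ∀ (n : ℕ) (e : OrthonormalBasis (Fin n) ℝ V) (X Y : V),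
        ∑ i : Fin n, ⟪R X (e i) Y, e i⟫ = 0 := by
  intro R hR n e X0 Y0
  classical
  obtain ⟨hRg, hRanti, hRB⟩ := hR
  obtain ⟨b, hbdef⟩ : ∃ b' : OrthonormalBasis (Fin (Module.finrank ℝ V)) ℝ V,
      b' = stdOrthonormalBasis ℝ V := ⟨_, rfl⟩
  -- basic antisymmetries of R
  have a1 : ∀ u v z w : V, ⟪R u v z, w⟫ = -⟪R v u z, w⟫ := by
    intro u v z w; rw [hRanti u v]; simp
  have a2 : ∀ u v z w : V, ⟪R u v z, w⟫ = -⟪R u v w, z⟫ := by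
    intro u v z w
    rw [hgskew _ (hRg u v) z w, real_inner_comm]
  -- symmetries of T
  have Tsw01 : ∀ u v w : V, T ![u, v, w] = -T ![v, u, w] := by
    intro u v w
    have h := T.map_swap ![v, u, w] (show (0 : Fin 3) ≠ 1 by decide)
    have h2 : (![v, u, w] ∘ Equiv.swap (0 : Fin 3) 1) = ![u, v, w] := by
      funext k; fin_cases k <;> simp [Equiv.swap_apply_of_ne_of_ne]
    rw [h2] at h; exact h
  have Tsw12 : ∀ u v w : V, T ![u, v, w] = -T ![u, w, v] := by
    intro u v w
    have h := T.map_swap ![u, w, v] (show (1 : Fin 3) ≠ 2 by decide)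
    have h2 : (![u, w, v] ∘ Equiv.swap (1 : Fin 3) 2) = ![u, v, w] := by
      funext k; fin_cases k <;> simp [Equiv.swap_apply_of_ne_of_ne]
    rw [h2] at h; exact h
  have tswap : ∀ u v w : V, ⟪TX u v, w⟫ = -⟪TX v u, w⟫ := by
    intro u v w; rw [hTX, hTX, Tsw01]
  have tskew : ∀ u v w : V, ⟪TX u v, w⟫ = -⟪TX u w, v⟫ := by
    intro u v w; rw [hTX, hTX, Tsw12]
  have tcyc : ∀ u v w : V, ⟪TX u v, w⟫ = ⟪TX w u, v⟫ := by
    intro u v w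
    rw [hTX, hTX, Tsw12 u v w, Tsw01 u w v, neg_neg]
  -- Parseval and expansion helpers for b
  have pars : ∀ u v : V, ⟪u, v⟫ = ∑ j, ⟪u, b j⟫ * ⟪v, b j⟫ := by
    intro u v
    rw [← b.sum_inner_mul_inner u v]
    exact Finset.sum_congr rfl fun j _ => by rw [real_inner_comm (b j) v]
  have hexp : ∀ (A : V →ₗ[ℝ] V) (u z : V), ∑ j, ⟪u, b j⟫ * ⟪A (b j), z⟫ = ⟪A u, z⟫ := by
    intro A u z
    conv_rhs => rw [← b.sum_repr' u]
    rw [map_sum, sum_inner]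
    exact Finset.sum_congr rfl fun j _ => by
      rw [map_smul, real_inner_smul_left, real_inner_comm u (b j)]
  -- orthogonality hA : ∑ᵢ ⟪R X Y bᵢ, T_W bᵢ⟫ = 0
  have hA : ∀ X Y W : V, (∑ i, ⟪R X Y (b i), TX W (b i)⟫) = 0 := by
    intro X Y W
    have h0 := hperp W (R X Y) (hRg X Y)
    simp only [formInner] at h0
    rw [← hbdef] at h0
    have hsym : ∀ i j, ⟪TX W (b i), b j⟫ * ⟪R X Y (b i), b j⟫
        = ⟪TX W (b j), b i⟫ * ⟪R X Y (b j), b i⟫ := by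
      intro i j
      rw [tskew W (b j) (b i), a2 X Y (b j) (b i)]; ring
    have hdg : ∀ i, ⟪TX W (b i), b i⟫ * ⟪R X Y (b i), b i⟫ = 0 := by
      intro i
      have := a2 X Y (b i) (b i)
      have h : ⟪R X Y (b i), b i⟫ = 0 := by linarith
      rw [h, mul_zero]
    have hfull : ∑ i, ∑ j, (⟪TX W (b i), b j⟫ * ⟪R X Y (b i), b j⟫) = 0 := by
      have h2 : (∑ i, ∑ j, ⟪TX W (b i), b j⟫ * ⟪R X Y (b i), b j⟫)
          = 2 * ∑ i, ∑ j ∈ Finset.Ioi i, ⟪TX W (b i), b j⟫ * ⟪R X Y (b i), b j⟫ :=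
        aux_dbl _ hsym hdg
      rw [h0, mul_zero] at h2
      exact h2
    calc ∑ i, ⟪R X Y (b i), TX W (b i)⟫
        = ∑ i, ∑ j, (⟪TX W (b i), b j⟫ * ⟪R X Y (b i), b j⟫) := by
          refine Finset.sum_congr rfl fun i _ => ?_
          rw [pars (R X Y (b i)) (TX W (b i))]
          exact Finset.sum_congr rfl fun j _ => by ring
      _ = 0 := hfull
  -- pair symmetry
  have hBi : ∀ u v z w : V, ⟪R u v z, w⟫ + ⟪R v z u, w⟫ + ⟪R z u v, w⟫ = 0 := by
    intro u v z w
    have h := congrArg (fun t => ⟪t, w⟫) (hRB u v z)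
    simpa [inner_add_left] using h
  have hpair : ∀ u v z w : V, ⟪R u v z, w⟫ = ⟪R z w u, v⟫ := by
    intro X Y Z W
    have B1 := hBi X Y Z W
    have B2 := hBi Y Z W X
    have B3 := hBi Z W X Y
    have B4 := hBi W X Y Z
    have c1 : ⟪R Z X Y, W⟫ = -⟪R X Z Y, W⟫ := a1 Z X Y W
    have c2 : ⟪R Y Z W, X⟫ = -⟪R Y Z X, W⟫ := a2 Y Z W X
    have c3 : ⟪R Z W Y, X⟫ = -⟪R Z W X, Y⟫ := a2 Z W Y X
    have c4 : ⟪R W Y Z, X⟫ = ⟪R Y W X, Z⟫ := by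
      rw [a1 W Y Z X, a2 Y W Z X]; ring
    have c5 : ⟪R W X Z, Y⟫ = ⟪R X W Y, Z⟫ := by
      rw [a1 W X Z Y, a2 X W Z Y]; ring
    have c6 : ⟪R X Z W, Y⟫ = -⟪R X Z Y, W⟫ := a2 X Z W Y
    have c7 : ⟪R W X Y, Z⟫ = -⟪R X W Y, Z⟫ := a1 W X Y Z
    have c8 : ⟪R X Y W, Z⟫ = -⟪R X Y Z, W⟫ := a2 X Y W Z
    linarith
  -- hC
  have hC : ∀ X Y Z : V, ∑ i, ∑ j, ⟪TX X (b i), b j⟫ * ⟪R (b i) (b j) Y, Z⟫ = 0 := by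
    intro X Y Z
    calc ∑ i, ∑ j, ⟪TX X (b i), b j⟫ * ⟪R (b i) (b j) Y, Z⟫
        = ∑ i, ⟪R Y Z (b i), TX X (b i)⟫ := by
          refine Finset.sum_congr rfl fun i _ => ?_
          rw [pars (R Y Z (b i)) (TX X (b i))]
          refine Finset.sum_congr rfl fun j _ => ?_
          rw [hpair (b i) (b j) Y Z]; ring
      _ = 0 := hA Y Z X
  -- hD : ∑ᵢ ⟪R Y bᵢ (T_X bᵢ), Z⟫ = 0
  have hD : ∀ X Y Z : V, ∑ i, ⟪R Y (b i) (TX X (b i)), Z⟫ = 0 := by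
    intro X Y Z
    have key : ∀ i j, ⟪R (b i) (b j) Y, Z⟫
        = -⟪R (b j) Y (b i), Z⟫ - ⟪R Y (b i) (b j), Z⟫ := by
      intro i j
      have h := hBi (b i) (b j) Y Z
      linarith
    have e1 : ∑ i, ∑ j, ⟪TX X (b i), b j⟫ * ⟪R Y (b i) (b j), Z⟫
        = ∑ i, ⟪R Y (b i) (TX X (b i)), Z⟫ :=
      Finset.sum_congr rfl fun i _ => hexp (R Y (b i)) (TX X (b i)) Z
    have e2 : ∑ i, ∑ j, ⟪TX X (b i), b j⟫ * ⟪R (b j) Y (b i), Z⟫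
        = ∑ i, ⟪R Y (b i) (TX X (b i)), Z⟫ := by
      rw [Finset.sum_comm]
      refine Finset.sum_congr rfl fun j _ => ?_
      calc ∑ i, ⟪TX X (b i), b j⟫ * ⟪R (b j) Y (b i), Z⟫
          = ∑ i, -(⟪TX X (b j), b i⟫ * ⟪R (b j) Y (b i), Z⟫) := by
            refine Finset.sum_congr rfl fun i _ => ?_
            rw [tskew X (b i) (b j)]; ring
        _ = -⟪R (b j) Y (TX X (b j)), Z⟫ := by
            rw [Finset.sum_neg_distrib, hexp (R (b j) Y) (TX X (b j)) Z]
        _ = ⟪R Y (b j) (TX X (b j)), Z⟫ := by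
            rw [a1 (b j) Y (TX X (b j)) Z]; ring
    have hsplit : (0:ℝ) = -(∑ i, ⟪R Y (b i) (TX X (b i)), Z⟫)
        - ∑ i, ⟪R Y (b i) (TX X (b i)), Z⟫ := by
      calc (0:ℝ) = ∑ i, ∑ j, ⟪TX X (b i), b j⟫ * ⟪R (b i) (b j) Y, Z⟫ := (hC X Y Z).symm
        _ = ∑ i, ∑ j, (-(⟪TX X (b i), b j⟫ * ⟪R (b j) Y (b i), Z⟫)
              - ⟪TX X (b i), b j⟫ * ⟪R Y (b i) (b j), Z⟫) := by
            refine Finset.sum_congr rfl fun i _ => Finset.sum_congr rfl fun j _ => ?_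
            rw [key i j]; ring
        _ = -(∑ i, ∑ j, ⟪TX X (b i), b j⟫ * ⟪R (b j) Y (b i), Z⟫)
              - ∑ i, ∑ j, ⟪TX X (b i), b j⟫ * ⟪R Y (b i) (b j), Z⟫ := by
            simp [Finset.sum_sub_distrib, Finset.sum_neg_distrib]
        _ = -(∑ i, ⟪R Y (b i) (TX X (b i)), Z⟫)
              - ∑ i, ⟪R Y (b i) (TX X (b i)), Z⟫ := by rw [e1, e2]
    linarith
  -- the Ricci vector
  set s : V → V := fun Y => ∑ i, R Y (b i) (b i) with hs
  -- hF
  have hF : ∀ Y Z W : V, ∑ i, ⟪R Y (b i) Z, TX W (b i)⟫ = ⟪TX Z (s Y), W⟫ := by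
    intro Y Z W
    have hi : ∀ i, TX ((R Y (b i)) Z) (b i)
        = (R Y (b i)) (TX Z (b i)) - TX Z ((R Y (b i)) (b i)) := by
      intro i
      have h := hginv (R Y (b i)) (hRg Y (b i)) Z
      have h2 := congrArg (fun (F : V →ₗ[ℝ] V) => F (b i)) h
      simpa using h2.symm
    have hsum : ∑ i, ⟪TX ((R Y (b i)) Z) (b i), W⟫
        = (∑ i, ⟪R Y (b i) (TX Z (b i)), W⟫) - ∑ i, ⟪TX Z (R Y (b i) (b i)), W⟫ := by
      rw [← Finset.sum_sub_distrib]
      refine Finset.sum_congr rfl fun i _ => ?_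
      rw [hi i, inner_sub_left]
    have hz : ∑ i, ⟪R Y (b i) (TX Z (b i)), W⟫ = 0 := hD Z Y W
    have hsY : ∑ i, ⟪TX Z (R Y (b i) (b i)), W⟫ = ⟪TX Z (s Y), W⟫ := by
      rw [hs]
      simp only []
      rw [map_sum (TX Z) _ Finset.univ, sum_inner]
    have hL : ∑ i, ⟪TX ((R Y (b i)) Z) (b i), W⟫
        = -∑ i, ⟪R Y (b i) Z, TX W (b i)⟫ := by
      rw [← Finset.sum_neg_distrib]
      refine Finset.sum_congr rfl fun i _ => ?_
      rw [tcyc ((R Y (b i)) Z) (b i) W, tskew W ((R Y (b i)) Z) (b i),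
        real_inner_comm (TX W (b i)) ((R Y (b i)) Z)]
    rw [hL, hz] at hsum
    rw [hsY] at hsum
    linarith
  -- symmetry of P in first two arguments
  have hPsym : ∀ Y Z W : V, ∑ i, ⟪R Y (b i) Z, TX W (b i)⟫
      = ∑ i, ⟪R Z (b i) Y, TX W (b i)⟫ := by
    intro Y Z W
    have h1 : ∀ i, ⟪R Y (b i) Z, TX W (b i)⟫ + ⟪R (b i) Z Y, TX W (b i)⟫
        + ⟪R Z Y (b i), TX W (b i)⟫ = 0 := fun i => hBi Y (b i) Z (TX W (b i))
    have h2 : ∑ i, (⟪R Y (b i) Z, TX W (b i)⟫ + ⟪R (b i) Z Y, TX W (b i)⟫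
        + ⟪R Z Y (b i), TX W (b i)⟫) = 0 := by
      rw [Finset.sum_congr rfl fun i _ => h1 i]; simp
    rw [Finset.sum_add_distrib, Finset.sum_add_distrib] at h2
    have h3 : ∑ i, ⟪R Z Y (b i), TX W (b i)⟫ = 0 := hA Z Y W
    have h4 : ∑ i, ⟪R (b i) Z Y, TX W (b i)⟫ = -∑ i, ⟪R Z (b i) Y, TX W (b i)⟫ := by
      rw [← Finset.sum_neg_distrib]
      exact Finset.sum_congr rfl fun i _ => a1 (b i) Z Y (TX W (b i))
    rw [h3, h4] at h2
    linarith
  -- hG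
  have hG : ∀ u z w : V, ⟪TX u (s z), w⟫ = ⟪TX z (s u), w⟫ := by
    intro u z w
    rw [← hF z u w, ← hF u z w, hPsym z u w]
  -- T(·, s z, ·) = 0
  have hA3 : ∀ u z w : V, ⟪TX u (s z), w⟫ = 0 := by
    intro u z w
    have asym : ∀ u v w : V, ⟪TX u v, w⟫ = -⟪TX w v, u⟫ := by
      intro u v w; rw [tcyc u v w, tskew w u v]
    have e1 : ⟪TX u (s z), w⟫ = ⟪TX z (s u), w⟫ := hG u z w
    have e2 : ⟪TX z (s u), w⟫ = -⟪TX w (s u), z⟫ := asym z (s u) w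
    have e3 : ⟪TX w (s u), z⟫ = ⟪TX u (s w), z⟫ := hG w u z
    have e4 : ⟪TX u (s w), z⟫ = -⟪TX z (s w), u⟫ := asym u (s w) z
    have e5 : ⟪TX z (s w), u⟫ = ⟪TX w (s z), u⟫ := hG z w u
    have e6 : ⟪TX w (s z), u⟫ = -⟪TX u (s z), w⟫ := asym w (s z) u
    linarith
  -- s vanishes
  have hszero : ∀ z : V, s z = 0 := by
    intro z
    apply hnd
    apply LinearMap.ext
    intro u
    have hz : ∀ w : V, ⟪TX (s z) u, w⟫ = 0 := by
      intro w
      rw [tswap (s z) u w, hA3 u z w]; ring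
    have := hz (TX (s z) u)
    simpa [inner_self_eq_zero (𝕜 := ℝ)] using this
  -- conclusion
  set B2 : V →ₗ[ℝ] V →ₗ[ℝ] ℝ := LinearMap.mk₂ ℝ (fun U W => ⟪R X0 U Y0, W⟫)
    (fun m' n' W => by simp [inner_add_left])
    (fun c m' W => by simp [real_inner_smul_left])
    (fun U m' n' => by simp [inner_add_right])
    (fun c U m' => by simp [real_inner_smul_right]) with hB2
  have hbi := aux_bilin e b B2
  have hB2app : ∀ u w : V, B2 u w = ⟪R X0 u Y0, w⟫ := fun u w => rfl
  have hgoal : ∑ i, ⟪R X0 (e i) Y0, e i⟫ = ∑ j, ⟪R X0 (b j) Y0, b j⟫ := by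
    calc ∑ i, ⟪R X0 (e i) Y0, e i⟫ = ∑ i, B2 (e i) (e i) := by
          exact Finset.sum_congr rfl fun i _ => (hB2app _ _).symm
      _ = ∑ j, B2 (b j) (b j) := hbi
      _ = ∑ j, ⟪R X0 (b j) Y0, b j⟫ := Finset.sum_congr rfl fun j _ => hB2app _ _
  rw [hgoal]
  have hfin : ∑ j, ⟪R X0 (b j) Y0, b j⟫ = -⟪s Y0, X0⟫ := by
    rw [hs]; simp only []
    rw [sum_inner, ← Finset.sum_neg_distrib]
    refine Finset.sum_congr rfl fun j _ => ?_
    rw [a1 X0 (b j) Y0 (b j), hpair (b j) X0 Y0 (b j)]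
  rw [hfin, hszero Y0]
  simp
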